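/- arXiv:1212.5574 — 2 statements merged into one kernel-verified Lean document; each statement's English description precedes it below -/
import Mathlib

section
/- Let Z₁, Z₂ be standard Borel spaces, let (g¹_s)_{s∈ℝ} and (g²_s)_{s∈ℝ} be measurable flows on Z₁ and Z₂ respectively with each g¹_s a Borel bijection, and let π : Z₁ → Z₂ be a Borel measurable map such that (1) for every z₂ ∈ Z₂ the preimage π⁻¹({z₂}) is finite, and (2) π ∘ g¹_s = g²_s ∘ π for all s ∈ ℝ. Let P₂ be a Borel probability measure on Z₂ that is invariant and ergodic under the flow (g²_s). Then there exists a natural number c such that for P₂-almost every z₂ ∈ Z₂ the cardinality of the preimage π⁻¹({z₂}) equals c. -/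
/-!
Since `g¹_s` maps the fibre of `π` over `z` bijectively onto the fibre over `g²_s z`, the fibre
cardinality `N z = #π⁻¹{z}` is invariant under the flow, and ergodicity makes it a.e. constant
once it is known to be Borel. After refining the topology of `Z₁` so that `π` becomes continuous,
`{z | n ≤ N z}` is a countable union of finite intersections of images of basic open sets, so it
suffices that a continuous finite-to-one map on a Polish space has a Borel range (Lusin–Novikov).
For this, cover the space by a Lusin scheme of Borel cells. At each level the images of the cells
form a point-finite family of analytic sets, and Novikov's separation theorem gives point-finite
Borel envelopes for it. A point lying in envelopes at every level then determines a finitely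
branching tree of cells, and a branch given by Kőnig's lemma shrinks to a preimage of the point.
-/

open Set Function PiNat MeasureTheory Topology

namespace PiNat

variable {β : Type*}

theorem exists_cylinder_subset [TopologicalSpace β] [DiscreteTopology β] {x : ℕ → β}
    {s : Set (ℕ → β)} (hs : s ∈ 𝓝 x) : ∃ a, cylinder x a ⊆ s := by
  obtain ⟨_, ⟨y, a, rfl⟩, hx, hsub⟩ := (isTopologicalBasis_cylinders _).mem_nhds_iff.1 hs
  exact ⟨a, by rwa [mem_cylinder_iff_eq.1 hx]⟩

theorem mem_cylinder_of_forall_succ_mem {v : ℕ → ℕ → β} {d : ℕ → ℕ} (hd : Monotone d)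
    (hv : ∀ k, v (k + 1) ∈ cylinder (v k) (d k)) {k k' : ℕ} (h : k ≤ k') :
    v k' ∈ cylinder (v k) (d k) := by
  induction k', h using Nat.le_induction with
  | base => exact self_mem_cylinder _ _
  | succ k' hkk' ih =>
    rw [← mem_cylinder_iff_eq.1 ih]
    exact cylinder_anti _ (hd hkk') (hv k')

theorem exists_forall_mem_cylinder {v : ℕ → ℕ → β} {d : ℕ → ℕ} (hd : Monotone d)
    (hv : ∀ k, v (k + 1) ∈ cylinder (v k) (d k)) :
    ∃ x : ℕ → β, ∀ k, v k ∈ cylinder x (d k) := by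
  classical
  refine ⟨fun i => if h : ∃ k, i < d k then v h.choose i else v 0 i, fun k => ?_⟩
  refine mem_cylinder_iff.2 fun i hi => ?_
  have h : ∃ k, i < d k := ⟨k, hi⟩
  simp only [h, dite_true]
  rcases le_total k h.choose with hk | hk
  · exact (mem_cylinder_iff.1 (mem_cylinder_of_forall_succ_mem hd hv hk) i hi).symm
  · exact mem_cylinder_iff.1 (mem_cylinder_of_forall_succ_mem hd hv hk) i h.choose_spec

end PiNat

section Novikov

variable {α : Type*} [MeasurableSpace α]

def MeasurablySeparableSeq (s : ℕ → Set α) : Prop :=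
  ∃ B : ℕ → Set α, (∀ n, s n ⊆ B n) ∧ (∀ n, MeasurableSet (B n)) ∧ ⋂ n, B n = ∅

theorem MeasurablySeparableSeq.of_iUnion {s : ℕ → Set α} {m : ℕ} {u : ℕ → Set α}
    (hu : s m = ⋃ i, u i) (H : ∀ i, MeasurablySeparableSeq (update s m (u i))) :
    MeasurablySeparableSeq s := by
  choose B hsB hB hB₀ using H
  refine ⟨update (fun n => ⋂ i, B i n) m (⋃ i, B i m), fun n => ?_, fun n => ?_, ?_⟩
  · rcases eq_or_ne n m with rfl | hn
    · simpa [hu] using iUnion_mono fun i => by simpa using hsB i n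
    · simpa [hn] using fun i => by simpa [hn] using hsB i n
  · rcases eq_or_ne n m with rfl | hn
    · simpa using MeasurableSet.iUnion fun i => hB i n
    · simpa [hn] using MeasurableSet.iInter fun i => hB i n
  · refine eq_empty_of_forall_notMem fun z hz => ?_
    obtain ⟨i, hi⟩ := mem_iUnion.1 (by simpa using mem_iInter.1 hz m)
    suffices z ∈ ⋂ n, B i n by simp [hB₀ i] at this
    refine mem_iInter.2 fun n => ?_
    rcases eq_or_ne n m with rfl | hn
    · exact hi
    · exact mem_iInter.1 (by simpa [hn] using mem_iInter.1 hz n) i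

theorem MeasurablySeparableSeq.of_subset_compl {s : ℕ → Set α} {n m : ℕ} (hnm : n ≠ m)
    {U : Set α} (hU : MeasurableSet U) (hn : s n ⊆ U) (hm : s m ⊆ Uᶜ) :
    MeasurablySeparableSeq s := by
  refine ⟨update (update (fun _ => univ) n U) m Uᶜ, fun k => ?_, fun k => ?_, ?_⟩
  · rcases eq_or_ne k m with rfl | hkm
    · simpa using hm
    rcases eq_or_ne k n with rfl | hkn
    · simpa [hkm] using hn
    · simp [hkm, hkn]
  · rcases eq_or_ne k m with rfl | hkm
    · simpa using hU.compl
    rcases eq_or_ne k n with rfl | hkn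
    · simpa [hkm] using hU
    · simp [hkm, hkn]
  · refine eq_empty_of_forall_notMem fun z hz => ?_
    have hzn := mem_iInter.1 hz n
    have hzm := mem_iInter.1 hz m
    simp only [update_self, update_of_ne hnm] at hzn hzm
    exact hzm hzn

variable (f : ℕ → (ℕ → ℕ) → α)

theorem exists_refine_of_not_measurablySeparableSeq {w : ℕ → ℕ → ℕ} {d : ℕ → ℕ}
    (hw : ¬ MeasurablySeparableSeq fun n => f n '' cylinder (w n) (d n)) (m : ℕ) :
    ∃ w' : ℕ → ℕ → ℕ, (∀ n, w' n ∈ cylinder (w n) (d n)) ∧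
      ¬ MeasurablySeparableSeq fun n => f n '' cylinder (w' n) (update d m (d m + 1) n) := by
  by_contra! H
  refine hw (.of_iUnion (m := m)
    (u := fun i => f m '' cylinder (update (w m) (d m) i) (d m + 1)) ?_ fun i => ?_)
  · rw [← image_iUnion]
    exact congrArg _ (iUnion_cylinder_update (w m) (d m)).symm
  · convert H (update w m (update (w m) (d m) i)) fun n => ?_ using 1
    · funext n
      rcases eq_or_ne n m with rfl | hn <;> simp [*]
    · rcases eq_or_ne n m with rfl | hn
      · simpa using update_mem_cylinder _ _ _
      · simp [hn]

theorem exists_refine_lt_of_not_measurablySeparableSeq {w : ℕ → ℕ → ℕ} {d : ℕ → ℕ}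
    (hw : ¬ MeasurablySeparableSeq fun n => f n '' cylinder (w n) (d n)) (j : ℕ) :
    ∃ w' : ℕ → ℕ → ℕ, (∀ n, w' n ∈ cylinder (w n) (d n)) ∧ ¬ MeasurablySeparableSeq
      fun n => f n '' cylinder (w' n) (if n < j then d n + 1 else d n) := by
  induction j with
  | zero => exact ⟨w, fun n => self_mem_cylinder _ _, by simpa using hw⟩
  | succ j ih =>
    obtain ⟨w₁, hw₁, hsep₁⟩ := ih
    obtain ⟨w₂, hw₂, hsep₂⟩ := exists_refine_of_not_measurablySeparableSeq f hsep₁ j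
    refine ⟨w₂, fun n => ?_, ?_⟩
    · rw [← mem_cylinder_iff_eq.1 (hw₁ n)]
      exact cylinder_anti _ (by split_ifs <;> omega) (hw₂ n)
    · have hd : update (fun n => if n < j then d n + 1 else d n) j
          ((if j < j then d j + 1 else d j) + 1) = fun n => if n < j + 1 then d n + 1 else d n := by
        funext n
        rcases eq_or_ne n j with rfl | hn
        · simp
        · simp only [update_of_ne hn]
          split_ifs <;> omega
      rwa [hd] at hsep₂

theorem exists_next_stage_of_not_measurablySeparableSeq {w : ℕ → ℕ → ℕ} {k : ℕ}
    (hw : ¬ MeasurablySeparableSeq fun n => f n '' cylinder (w n) (k - n)) :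
    ∃ w' : ℕ → ℕ → ℕ, (∀ n, w' n ∈ cylinder (w n) (k - n)) ∧
      ¬ MeasurablySeparableSeq fun n => f n '' cylinder (w' n) (k + 1 - n) := by
  obtain ⟨w', hw', hsep⟩ := exists_refine_lt_of_not_measurablySeparableSeq f hw (k + 1)
  have hd : ∀ n, (if n < k + 1 then k - n + 1 else k - n) = k + 1 - n := by
    intro n
    split_ifs <;> omega
  exact ⟨w', hw', by simpa only [hd] using hsep⟩

variable [TopologicalSpace α] [T2Space α] [OpensMeasurableSpace α]

theorem eq_of_forall_not_measurablySeparableSeq (hf : ∀ n, Continuous (f n)) {x : ℕ → ℕ → ℕ}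
    (hx : ∀ k, ¬ MeasurablySeparableSeq fun n => f n '' cylinder (x n) (k - n)) (n m : ℕ) :
    f n (x n) = f m (x m) := by
  rcases eq_or_ne n m with rfl | hnm
  · rfl
  by_contra hne
  obtain ⟨U, V, hU, hV, hnU, hmV, hUV⟩ := t2_separation hne
  obtain ⟨a, ha⟩ :=
    exists_cylinder_subset ((hf n).continuousAt.preimage_mem_nhds (hU.mem_nhds hnU))
  obtain ⟨b, hb⟩ :=
    exists_cylinder_subset ((hf m).continuousAt.preimage_mem_nhds (hV.mem_nhds hmV))
  refine hx (a + b + n + m) (.of_subset_compl hnm hU.measurableSet ?_ ?_)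
  · exact image_subset_iff.2 ((cylinder_anti _ (by omega)).trans ha)
  · exact (image_subset_iff.2 ((cylinder_anti _ (by omega)).trans hb)).trans
      hUV.subset_compl_left

/- At stage `k` the `n`-th set is shrunk to the image of a cylinder of depth `k - n`, keeping the
family non-separable; the limit points `x n` of the cylinders then all have the same image. -/
theorem measurablySeparableSeq_range_of_iInter_eq_empty (hf : ∀ n, Continuous (f n))
    (h : ⋂ n, range (f n) = ∅) : MeasurablySeparableSeq fun n => range (f n) := by
  by_contra h₀
  have step : ∀ k (w : ℕ → ℕ → ℕ), ∃ w' : ℕ → ℕ → ℕ,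
      (¬ MeasurablySeparableSeq fun n => f n '' cylinder (w n) (k - n)) →
        (∀ n, w' n ∈ cylinder (w n) (k - n)) ∧
          ¬ MeasurablySeparableSeq fun n => f n '' cylinder (w' n) (k + 1 - n) := by
    intro k w
    by_cases hw : MeasurablySeparableSeq fun n => f n '' cylinder (w n) (k - n)
    · exact ⟨w, fun h => absurd hw h⟩
    · exact (exists_next_stage_of_not_measurablySeparableSeq f hw).imp fun _ h _ => h
  choose next hnext using step
  let W : ℕ → ℕ → ℕ → ℕ := fun k => Nat.rec (fun _ _ => 0) next k
  have hW : ∀ k, ¬ MeasurablySeparableSeq fun n => f n '' cylinder (W k n) (k - n) := by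
    intro k
    induction k with
    | zero => simpa [cylinder_zero] using h₀
    | succ k ih => exact (hnext k (W k) ih).2
  choose x hx using fun n => exists_forall_mem_cylinder (v := fun k => W k n)
    (fun a b h => Nat.sub_le_sub_right h n) fun k => (hnext k (W k) (hW k)).1 n
  have hlim : ∀ k, ¬ MeasurablySeparableSeq fun n => f n '' cylinder (x n) (k - n) := by
    intro k
    have hcyl := fun n => mem_cylinder_iff_eq.1 (hx n k)
    simpa only [hcyl] using hW k
  have : f 0 (x 0) ∈ ⋂ n, range (f n) :=
    mem_iInter.2 fun n => eq_of_forall_not_measurablySeparableSeq f hf hlim n 0 ▸ mem_range_self _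
  simp [h] at this

theorem measurablySeparableSeq_of_analyticSet {s : ℕ → Set α} (hs : ∀ n, AnalyticSet (s n))
    (h : ⋂ n, s n = ∅) : MeasurablySeparableSeq s := by
  by_cases he : ∃ n, s n = ∅
  · obtain ⟨n, hn⟩ := he
    refine ⟨update (fun _ => univ) n ∅, fun k => ?_, fun k => ?_, ?_⟩
    · rcases eq_or_ne k n with rfl | hk <;> simp [*]
    · rcases eq_or_ne k n with rfl | hk <;> simp [*]
    · exact eq_empty_of_subset_empty ((iInter_subset _ n).trans (by simp))
  push Not at he
  simp only [AnalyticSet] at hs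
  choose g hg hgs using fun n => (hs n).resolve_left (he n).ne_empty
  have hs' : s = fun n => range (g n) := funext fun n => (hgs n).symm
  subst hs'
  exact measurablySeparableSeq_range_of_iInter_eq_empty g hg h

theorem exists_measurableSet_superset_pointFinite_of_analyticSet {ι : Type*} [Countable ι]
    {s : ι → Set α} (hs : ∀ i, AnalyticSet (s i)) (hfin : ∀ y, {i | y ∈ s i}.Finite) :
    ∃ B : ι → Set α, (∀ i, s i ⊆ B i) ∧ (∀ i, MeasurableSet (B i)) ∧
      ∀ y, {i | y ∈ B i}.Finite := by
  obtain ⟨e, he⟩ := Countable.exists_injective_nat ι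
  set D : ℕ → Set α := fun m => ⋃ i : {i // m ≤ e i}, s i
  have hD : ⋂ m, D m = ∅ := by
    refine eq_empty_of_forall_notMem fun y hy => ?_
    obtain ⟨M, hM⟩ := ((hfin y).image e).bddAbove
    obtain ⟨i, hi, hyi⟩ : ∃ i, M + 1 ≤ e i ∧ y ∈ s i := by
      simpa [D] using mem_iInter.1 hy (M + 1)
    have := hM (mem_image_of_mem e hyi)
    omega
  obtain ⟨E, hDE, hE, hE₀⟩ := measurablySeparableSeq_of_analyticSet (s := D)
    (fun m => AnalyticSet.iUnion fun i => hs i) hD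
  refine ⟨fun i => ⋂ (m) (_ : m ≤ e i), E m, fun i => subset_iInter₂ fun m hm =>
    (subset_iUnion (fun i : {i // m ≤ e i} => s i) ⟨i, hm⟩).trans (hDE m),
    fun i => .iInter fun m => .iInter fun _ => hE m, fun y => ?_⟩
  have hy : y ∉ ⋂ m, E m := by rw [hE₀]; exact notMem_empty y
  obtain ⟨M, hM⟩ : ∃ M, y ∉ E M := by simpa using hy
  refine ((finite_lt_nat M).preimage he.injOn).subset fun i hi => ?_
  by_contra hlt
  exact hM (mem_iInter₂.1 hi M (not_lt.1 hlt))

end Novikov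

theorem finite_setOf_mem_image_of_pairwise_disjoint {ι X Y : Type*} {f : X → Y} {C : ι → Set X}
    (hC : Pairwise (Disjoint on C)) {y : Y} (hy : (f ⁻¹' {y}).Finite) :
    {i | y ∈ f '' C i}.Finite := by
  have hsub : ∀ x, {i | x ∈ C i}.Subsingleton := fun x i hi j hj => by
    by_contra hne
    exact (hC hne).ne_of_mem hi hj rfl
  refine (hy.biUnion fun x _ => (hsub x).finite).subset fun i ⟨x, hx, hxy⟩ => ?_
  exact mem_iUnion₂.2 ⟨x, hxy, hx⟩

theorem exists_branch_of_finite_levels {β : Type*} (T : ∀ n, Set (Fin n → β))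
    (hT : ∀ {n k} (h : n ≤ k) (v : Fin k → β), v ∈ T k → v ∘ Fin.castLE h ∈ T n)
    (hfin : ∀ n, (T n).Finite) (hne : ∀ n, (T n).Nonempty) :
    ∃ x : ℕ → β, ∀ n, (fun i : Fin n => x i) ∈ T n := by
  have := fun n => (hfin n).to_subtype
  have := fun n => (hne n).to_subtype
  obtain ⟨F, hF⟩ := exists_seq_forall_proj_of_forall_finite (α := fun n => T n)
    (fun h v => ⟨v.1 ∘ Fin.castLE h, hT h v.1 v.2⟩) (fun _ _ => rfl) (fun _ _ _ _ _ _ => rfl)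
    (fun _ _ => toFinite _)
  refine ⟨fun i => (F (i + 1)).1 (Fin.last i), fun n => ?_⟩
  convert (F n).2 using 1
  funext i
  exact (congrArg (fun v : T (i + 1) => v.1 (Fin.last i)) (hF (i.2 : (i : ℕ) + 1 ≤ n))).symm

section DyadicCell

variable {X : Type*} [MetricSpace X] (u : ℕ → X)

def dyadicCell {n : ℕ} (v : Fin n → ℕ) : Set X :=
  ⋂ m : Fin n, disjointed (fun i => Metric.ball (u i) ((1 / 2) ^ (m : ℕ))) (v m)

theorem measurableSet_dyadicCell [MeasurableSpace X] [OpensMeasurableSpace X] {n : ℕ}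
    (v : Fin n → ℕ) : MeasurableSet (dyadicCell u v) :=
  .iInter fun _ => MeasurableSet.disjointed (fun _ => measurableSet_ball) _

theorem pairwise_disjoint_dyadicCell (n : ℕ) :
    Pairwise (Disjoint on (dyadicCell u : (Fin n → ℕ) → Set X)) := by
  intro v w hvw
  obtain ⟨m, hm⟩ := Function.ne_iff.1 hvw
  exact (disjoint_disjointed _ hm).mono (iInter_subset _ m) (iInter_subset _ m)

theorem dyadicCell_subset_comp_castLE {n k : ℕ} (h : n ≤ k) (v : Fin k → ℕ) :
    dyadicCell u v ⊆ dyadicCell u (v ∘ Fin.castLE h) :=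
  subset_iInter fun m => iInter_subset _ (Fin.castLE h m)

theorem dyadicCell_subset_ball {n : ℕ} (v : Fin (n + 1) → ℕ) :
    dyadicCell u v ⊆ Metric.ball (u (v (Fin.last n))) ((1 / 2) ^ n) :=
  (iInter_subset _ (Fin.last n)).trans (disjointed_subset _ _)

theorem exists_forall_mem_dyadicCell (hu : DenseRange u) (x : X) :
    ∃ a : ℕ → ℕ, ∀ n, x ∈ dyadicCell u (fun i : Fin n => a i) := by
  have : ∀ m : ℕ, ∃ i, x ∈ disjointed (fun i => Metric.ball (u i) ((1 / 2) ^ m)) i := by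
    intro m
    rw [← mem_iUnion, iUnion_disjointed, mem_iUnion]
    exact hu.exists_dist_lt x (by positivity)
  choose a ha using this
  exact ⟨a, fun n => mem_iInter.2 fun m => ha m⟩

theorem exists_forall_dist_le_of_nonempty_dyadicCell [CompleteSpace X] {a : ℕ → ℕ}
    (hne : ∀ n, (dyadicCell u (fun i : Fin n => a i)).Nonempty) :
    ∃ z, ∀ n, dist z (u (a n)) ≤ (1 / 2) ^ n := by
  choose p hp using fun n => hne (n + 1)
  have hball : ∀ n k, n ≤ k → dist (p k) (u (a n)) < (1 / 2) ^ n := fun n k h =>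
    dyadicCell_subset_ball u _ (dyadicCell_subset_comp_castLE u (by omega : n + 1 ≤ k + 1) _ (hp k))
  have hcauchy : CauchySeq p := cauchySeq_of_le_geometric_two (C := 4) fun n => by
    have h₁ := hball n n le_rfl
    have h₂ := hball n (n + 1) (by omega)
    calc dist (p n) (p (n + 1)) ≤ dist (p n) (u (a n)) + dist (p (n + 1)) (u (a n)) :=
          dist_triangle_right _ _ _
      _ ≤ 4 / 2 / 2 ^ n := by rw [one_div_pow] at h₁ h₂; field_simp at h₁ h₂ ⊢; linarith
  obtain ⟨z, hz⟩ := cauchySeq_tendsto_of_complete hcauchy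
  exact ⟨z, fun n => le_of_tendsto (hz.dist tendsto_const_nhds)
    (Filter.eventually_atTop.2 ⟨n, fun k hk => (hball n k hk).le⟩)⟩

theorem mem_range_of_forall_mem_closure_image_dyadicCell [CompleteSpace X] {Y : Type*}
    [TopologicalSpace Y] [T2Space Y] {f : X → Y} (hf : Continuous f) {a : ℕ → ℕ} {y : Y}
    (hy : ∀ n, y ∈ closure (f '' dyadicCell u (fun i : Fin n => a i))) : y ∈ range f := by
  obtain ⟨z, hz⟩ := exists_forall_dist_le_of_nonempty_dyadicCell u fun n =>
    (closure_nonempty_iff.1 ⟨y, hy n⟩).of_image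
  refine ⟨z, by_contra fun hne => ?_⟩
  obtain ⟨U, V, hU, hV, hzU, hyV, hUV⟩ := t2_separation hne
  obtain ⟨ε, hε, hεU⟩ := Metric.isOpen_iff.1 (hU.preimage hf) z hzU
  obtain ⟨n, hn⟩ := exists_pow_lt_of_lt_one (half_pos hε) (by norm_num : (1 / 2 : ℝ) < 1)
  have hsub : f '' dyadicCell u (fun i : Fin (n + 1) => a i) ⊆ U := by
    refine image_subset_iff.2 fun q hq => hεU ?_
    have hq' : dist q (u (a n)) < (1 / 2) ^ n := dyadicCell_subset_ball u _ hq
    rw [Metric.mem_ball]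
    calc dist q z ≤ dist q (u (a n)) + dist z (u (a n)) := dist_triangle_right _ _ _
      _ < ε := by linarith [hz n]
  exact (hUV.closure_left hV).ne_of_mem (closure_mono hsub (hy (n + 1))) hyV rfl

end DyadicCell

theorem measurableSet_range_of_continuous_of_finite_fibres {X Y : Type*} [TopologicalSpace X]
    [PolishSpace X] [TopologicalSpace Y] [T2Space Y] [MeasurableSpace Y] [OpensMeasurableSpace Y]
    {f : X → Y} (hf : Continuous f) (hfib : ∀ y, (f ⁻¹' {y}).Finite) :
    MeasurableSet (range f) := by
  rcases isEmpty_or_nonempty X with _ | _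
  · simp [range_eq_empty]
  let := TopologicalSpace.upgradeIsCompletelyMetrizable X
  let : MeasurableSpace X := borel X
  have : BorelSpace X := ⟨rfl⟩
  obtain ⟨u, hu⟩ := TopologicalSpace.exists_dense_seq X
  choose E hfE hE hEfin using fun n => exists_measurableSet_superset_pointFinite_of_analyticSet
    (fun v : Fin n → ℕ => (measurableSet_dyadicCell u v).analyticSet.image_of_continuous hf)
    fun y => finite_setOf_mem_image_of_pairwise_disjoint (pairwise_disjoint_dyadicCell u n)
      (hfib y)
  -- Intersecting over all prefixes makes `{v | y ∈ B v}` a tree, finitely branching because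
  -- the envelopes `E` are point-finite.
  let B : ∀ {n}, (Fin n → ℕ) → Set Y := fun {n} v => ⋂ (m) (h : m ≤ n),
    E m (v ∘ Fin.castLE h) ∩ closure (f '' dyadicCell u (v ∘ Fin.castLE h))
  suffices range f = ⋂ n, ⋃ v : Fin n → ℕ, B v by
    rw [this]
    exact .iInter fun n => .iUnion fun v => .iInter fun m => .iInter fun h =>
      (hE m _).inter isClosed_closure.measurableSet
  ext y
  refine ⟨?_, fun hy => ?_⟩
  · rintro ⟨x, rfl⟩
    obtain ⟨a, ha⟩ := exists_forall_mem_dyadicCell u hu x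
    exact mem_iInter.2 fun n => mem_iUnion.2 ⟨fun i => a i, mem_iInter₂.2 fun m _ =>
      ⟨hfE m _ (mem_image_of_mem f (ha m)), subset_closure (mem_image_of_mem f (ha m))⟩⟩
  obtain ⟨a, ha⟩ := exists_branch_of_finite_levels (fun n => {v : Fin n → ℕ | y ∈ B v})
    (fun h _ hv => mem_iInter₂.2 fun m h' => mem_iInter₂.1 hv m (h'.trans h))
    (fun n => (hEfin n y).subset fun v hv => (mem_iInter₂.1 hv n le_rfl).1)
    (fun n => mem_iUnion.1 (mem_iInter.1 hy n))
  exact mem_range_of_forall_mem_closure_image_dyadicCell u hf fun n =>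
    (mem_iInter₂.1 (ha n) n le_rfl).2

theorem IsOpen.measurableSet_image_of_continuous_of_finite_fibres {X Y : Type*}
    [TopologicalSpace X] [PolishSpace X] [TopologicalSpace Y] [T2Space Y] [MeasurableSpace Y]
    [OpensMeasurableSpace Y] {f : X → Y} (hf : Continuous f) (hfib : ∀ y, (f ⁻¹' {y}).Finite)
    {U : Set X} (hU : IsOpen U) : MeasurableSet (f '' U) := by
  have := hU.polishSpace
  rw [image_eq_range]
  exact measurableSet_range_of_continuous_of_finite_fibres (hf.comp continuous_subtype_val)
    fun y => (Finite.preimage Subtype.val_injective.injOn (hfib y) :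
      (((↑) : U → X) ⁻¹' (f ⁻¹' {y})).Finite)

theorem measurableSet_setOf_le_ncard_preimage {X Y : Type*} [TopologicalSpace X] [T2Space X]
    [SecondCountableTopology X] [MeasurableSpace Y] {f : X → Y} (hfib : ∀ y, (f ⁻¹' {y}).Finite)
    (himage : ∀ U, IsOpen U → MeasurableSet (f '' U)) (n : ℕ) :
    MeasurableSet {y | n ≤ (f ⁻¹' {y}).ncard} := by
  obtain ⟨b, hbc, -, hb⟩ := TopologicalSpace.exists_countable_basis X
  have := hbc.to_subtype
  suffices {y | n ≤ (f ⁻¹' {y}).ncard} = ⋃ (V : Fin n → b)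
      (_ : Pairwise (Disjoint on fun i => (V i : Set X))), ⋂ i, f '' V i by
    rw [this]
    exact .iUnion fun V => .iUnion fun _ => .iInter fun i => himage _ (hb.isOpen (V i).2)
  ext y
  simp only [mem_ofPred_eq, mem_iUnion, mem_iInter, exists_prop]
  constructor
  · intro hn
    have := (hfib y).fintype
    obtain ⟨e⟩ : Nonempty (Fin n ↪ f ⁻¹' {y}) := Function.Embedding.nonempty_of_card_le
      (by rwa [Fintype.card_fin, ← Nat.card_eq_fintype_card, Nat.card_coe_set_eq])
    obtain ⟨U, hU, hUd⟩ := (finite_range fun i => (e i : X)).t2_separation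
    choose V hV hxV hVU using fun i => hb.exists_subset_of_mem_open (hU (e i)).1 (hU (e i)).2
    refine ⟨fun i => ⟨V i, hV i⟩, fun i j hij => ?_, fun i => ⟨e i, hxV i, (e i).2⟩⟩
    exact (hUd (mem_range_self i) (mem_range_self j)
      (Subtype.val_injective.ne (e.injective.ne hij))).mono (hVU i) (hVU j)
  · rintro ⟨V, hVd, hy⟩
    choose x hxV hxy using hy
    have hinj : Injective x := fun i j hij => by
      by_contra hne
      exact (hVd hne).ne_of_mem (hxV i) (hxV j) hij
    calc n = (range x).ncard := by rw [ncard_range_of_injective hinj, Nat.card_fin]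
      _ ≤ _ := ncard_le_ncard (range_subset_iff.2 hxy) (hfib y)

theorem measurable_ncard_preimage_singleton {X Y : Type*} [MeasurableSpace X]
    [StandardBorelSpace X] [TopologicalSpace Y] [T2Space Y] [SecondCountableTopology Y]
    [MeasurableSpace Y] [OpensMeasurableSpace Y] {f : X → Y} (hf : Measurable f)
    (hfib : ∀ y, (f ⁻¹' {y}).Finite) : Measurable fun y => (f ⁻¹' {y}).ncard := by
  obtain ⟨τ, hτ, hfc⟩ : ∃ τ : TopologicalSpace X, @PolishSpace X τ ∧ Continuous[τ, _] f := by
    let := upgradeStandardBorel X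
    obtain ⟨τ, -, hfc, hτ⟩ := hf.exists_continuous
    exact ⟨τ, hτ, hfc⟩
  exact measurable_of_Ici fun n => measurableSet_setOf_le_ncard_preimage hfib
    (fun _ hU => hU.measurableSet_image_of_continuous_of_finite_fibres hfc hfib) n

theorem exists_ae_eq_const_of_comp_eq {Z T ι : Type*} [MeasurableSpace Z] [Countable ι]
    [MeasurableSpace ι] [MeasurableSingletonClass ι] {μ : Measure Z} [IsProbabilityMeasure μ]
    {g : T → Z → Z}
    (herg : ∀ A, MeasurableSet A → (∀ s, g s ⁻¹' A = A) → μ A = 0 ∨ μ A = 1) {φ : Z → ι}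
    (hφ : Measurable φ) (hinv : ∀ s, φ ∘ g s = φ) : ∃ c, ∀ᵐ z ∂μ, φ z = c := by
  by_contra h
  have hnull : ∀ c, μ (φ ⁻¹' {c}) = 0 := fun c =>
    (herg _ (hφ (measurableSet_singleton c)) fun s => by rw [← preimage_comp, hinv]).resolve_right
      fun h₁ => h ⟨c, ae_iff.2 ((prob_compl_eq_zero_iff (hφ (measurableSet_singleton c))).2 h₁)⟩
  have hcover : ⋃ c, φ ⁻¹' {c} = univ := eq_univ_of_forall fun z => mem_iUnion.2 ⟨φ z, rfl⟩
  simpa [hcover] using measure_iUnion_null hnull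

theorem ncard_preimage_singleton_of_semiconj {α β : Type*} {π : α → β} {e : α → α} {h : β → β}
    (he : Bijective e) (hh : Injective h) (hcomm : π ∘ e = h ∘ π) (z : β) :
    (π ⁻¹' {h z}).ncard = (π ⁻¹' {z}).ncard := by
  have hfib : π ⁻¹' {h z} = e '' (π ⁻¹' {z}) := by
    ext x
    obtain ⟨x, rfl⟩ := he.2 x
    have hx : π (e x) = h (π x) := congrFun hcomm x
    simp only [mem_preimage, mem_singleton_iff, he.1.mem_set_image, hx, hh.eq_iff]
  rw [hfib, ncard_image_of_injective _ he.1]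

theorem leftInverse_neg_of_map_add {G Z : Type*} [AddGroup G] {g : G → Z → Z} (h₀ : g 0 = id)
    (hadd : ∀ s t, g (s + t) = g s ∘ g t) (s : G) : LeftInverse (g (-s)) (g s) := fun z => by
  simpa [h₀] using (congrFun (hadd (-s) s) z).symm

theorem fibre_cardinality_ae_constant_general
    {Z₁ Z₂ : Type*} [MeasurableSpace Z₁] [StandardBorelSpace Z₁]
    [MeasurableSpace Z₂] [StandardBorelSpace Z₂]
    (g₁ : ℝ → Z₁ → Z₁) (g₂ : ℝ → Z₂ → Z₂)
    (hg₁bij : ∀ s, Function.Bijective (g₁ s))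
    (hg₂0 : g₂ 0 = id) (hg₂add : ∀ s t, g₂ (s + t) = g₂ s ∘ g₂ t)
    (π : Z₁ → Z₂) (hπ : Measurable π)
    (hfib : ∀ z₂ : Z₂, (π ⁻¹' {z₂}).Finite)
    (hcomm : ∀ s, π ∘ g₁ s = g₂ s ∘ π)
    (P₂ : Measure Z₂) [IsProbabilityMeasure P₂]
    (herg₂ : ∀ A : Set Z₂, MeasurableSet A → (∀ s, g₂ s ⁻¹' A = A) → P₂ A = 0 ∨ P₂ A = 1) :
    ∃ c : ℕ, ∀ᵐ z₂ ∂P₂, (π ⁻¹' {z₂}).ncard = c := by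
  let := upgradeStandardBorel Z₂
  refine exists_ae_eq_const_of_comp_eq herg₂ (measurable_ncard_preimage_singleton hπ hfib)
    fun s => funext fun z => ?_
  exact ncard_preimage_singleton_of_semiconj (hg₁bij s)
    (leftInverse_neg_of_map_add hg₂0 hg₂add s).injective (hcomm s) z

/-- Let `Z₁, Z₂` be standard Borel spaces with measurable flows `g¹, g²`
(each `g¹_s` a Borel bijection), and `π : Z₁ → Z₂` Borel measurable with finite fibres,
intertwining the flows. If `P₂` is an invariant ergodic Borel probability measure for
`g²`, then the cardinality of the fibre `π⁻¹{z₂}` is `P₂`-a.e. constant. -/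
theorem fibre_cardinality_ae_constant
    {Z₁ Z₂ : Type*} [MeasurableSpace Z₁] [StandardBorelSpace Z₁]
    [MeasurableSpace Z₂] [StandardBorelSpace Z₂]
    (g₁ : ℝ → Z₁ → Z₁) (g₂ : ℝ → Z₂ → Z₂)
    (hg₁m : ∀ s, Measurable (g₁ s)) (hg₁bij : ∀ s, Function.Bijective (g₁ s))
    (hg₁0 : g₁ 0 = id) (hg₁add : ∀ s t, g₁ (s + t) = g₁ s ∘ g₁ t)
    (hg₂m : ∀ s, Measurable (g₂ s))
    (hg₂0 : g₂ 0 = id) (hg₂add : ∀ s t, g₂ (s + t) = g₂ s ∘ g₂ t)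
    (π : Z₁ → Z₂) (hπ : Measurable π)
    (hfib : ∀ z₂ : Z₂, (π ⁻¹' {z₂}).Finite)
    (hcomm : ∀ s, π ∘ g₁ s = g₂ s ∘ π)
    (P₂ : Measure Z₂) [IsProbabilityMeasure P₂]
    (hinv₂ : ∀ s, MeasurePreserving (g₂ s) P₂ P₂)
    (herg₂ : ∀ A : Set Z₂, MeasurableSet A → (∀ s, g₂ s ⁻¹' A = A) → P₂ A = 0 ∨ P₂ A = 1) :
    ∃ c : ℕ, ∀ᵐ z₂ ∂P₂, (π ⁻¹' {z₂}).ncard = c :=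
  fibre_cardinality_ae_constant_general g₁ g₂ hg₁bij hg₂0 hg₂add π hπ hfib hcomm P₂ herg₂
end

section
/- Let m ∈ ℕ and let (B_k)_{k≥1} be a sequence of invertible real m×m matrices. Assume there are an integer l₀ ≥ 1, real numbers θ₁ > θ₂ > ⋯ > θ_{l₀} > 0, and a direct-sum decomposition ℝ^m = E¹ ⊕ ⋯ ⊕ E^{l₀} ⊕ E^{cs} of linear subspaces such that for every ε > 0 there exist constants c_ε, C_ε > 0 with: (i) for every i ∈ {1, …, l₀}, every v ∈ Eⁱ and every n ≥ 0, c_ε e^{−(θ_i+ε)n} ‖v‖ ≤ ‖B_n⁻¹ B_{n−1}⁻¹ ⋯ B_1⁻¹ v‖ ≤ C_ε e^{−(θ_i−ε)n} ‖v‖; and (ii) for every v ∈ E^{cs} and every n ≥ 0, ‖B_n⁻¹ B_{n−1}⁻¹ ⋯ B_1⁻¹ v‖ ≥ c_ε e^{−εn} ‖v‖. Then the set {v ∈ ℝ^m : there exist C > 0 and β > 0 such that ‖B_n⁻¹ B_{n−1}⁻¹ ⋯ B_1⁻¹ v‖ ≤ C e^{−βn} for all n ≥ 0} equals the subspace E¹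 ⊕ ⋯ ⊕ E^{l₀}. -/
open Matrix

/-- The backward product `B_n⁻¹ B_{n-1}⁻¹ ⋯ B_1⁻¹` (the identity when `n = 0`). -/
noncomputable def backProd {m : ℕ} (B : ℕ → Matrix (Fin m) (Fin m) ℝ) :
    ℕ → Matrix (Fin m) (Fin m) ℝ
  | 0 => 1
  | n + 1 => (B (n + 1))⁻¹ * backProd B n

/-- Let `(B_k)_{k ≥ 1}` be a sequence of invertible real `m × m` matrices
admitting an Oseledets-type direct-sum decomposition `ℝ^m = E¹ ⊕ ⋯ ⊕ E^{l₀} ⊕ E^{cs}` with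
exponents `θ₁ > ⋯ > θ_{l₀} > 0`, such that for every `ε > 0` there are `c, C > 0` with
`c e^{-(θᵢ+ε)n}‖v‖ ≤ ‖B_n⁻¹ ⋯ B_1⁻¹ v‖ ≤ C e^{-(θᵢ-ε)n}‖v‖` for `v ∈ Eⁱ` and
`‖B_n⁻¹ ⋯ B_1⁻¹ v‖ ≥ c e^{-εn}‖v‖` for `v ∈ E^{cs}`. Then the set of vectors whose backward
orbit decays exponentially coincides with `E¹ ⊕ ⋯ ⊕ E^{l₀}`. -/
theorem exp_decaying_vectors_eq_unstable_sum
    {m : ℕ} (l₀ : ℕ) (hl₀ : 1 ≤ l₀)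
    (B : ℕ → Matrix (Fin m) (Fin m) ℝ)
    (hBinv : ∀ k : ℕ, 1 ≤ k → IsUnit (B k).det)
    (θ : Fin l₀ → ℝ) (hθanti : StrictAnti θ) (hθpos : ∀ i, 0 < θ i)
    (E : Fin l₀ → Submodule ℝ (Fin m → ℝ)) (Ecs : Submodule ℝ (Fin m → ℝ))
    (hdecomp : DirectSum.IsInternal (fun i : Fin (l₀ + 1) =>
      if h : (i : ℕ) < l₀ then E ⟨i, h⟩ else Ecs))
    (hbounds : ∀ ε > (0 : ℝ), ∃ c > (0 : ℝ), ∃ C > (0 : ℝ),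
      (∀ i : Fin l₀, ∀ v ∈ E i, ∀ n : ℕ,
        c * Real.exp (-(θ i + ε) * n) * ‖v‖ ≤ ‖(backProd B n).mulVec v‖ ∧
        ‖(backProd B n).mulVec v‖ ≤ C * Real.exp (-(θ i - ε) * n) * ‖v‖) ∧
      (∀ v ∈ Ecs, ∀ n : ℕ,
        c * Real.exp (-ε * n) * ‖v‖ ≤ ‖(backProd B n).mulVec v‖)) :
    {v : Fin m → ℝ | ∃ C > (0 : ℝ), ∃ β > (0 : ℝ), ∀ n : ℕ,
      ‖(backProd B n).mulVec v‖ ≤ C * Real.exp (-β * n)} =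
    ↑(⨆ i : Fin l₀, E i) := by
  have normsum : ∀ (n : ℕ) (g : Fin l₀ → (Fin m → ℝ)),
      (backProd B n).mulVec (∑ i, g i) = ∑ i, (backProd B n).mulVec (g i) := by
    intro n g
    have h := map_sum ((backProd B n).mulVecLin) g Finset.univ
    simpa only [Matrix.mulVecLin_apply] using h
  have hlast : l₀ - 1 < l₀ := by omega
  have hθmin : ∀ i : Fin l₀, θ ⟨l₀ - 1, hlast⟩ ≤ θ i := by
    intro i
    refine hθanti.antitone ?_
    have hi := i.isLt
    rw [Fin.le_def]
    simp only
    omega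
  set θm := θ ⟨l₀ - 1, hlast⟩ with hθm
  have hθmpos : 0 < θm := hθpos _
  ext v
  simp only [Set.mem_setOf_eq, SetLike.mem_coe]
  constructor
  · rintro ⟨C, hC, β, hβ, hv⟩
    have htop : v ∈ ⨆ i : Fin (l₀ + 1),
        (if h : (i : ℕ) < l₀ then E ⟨i, h⟩ else Ecs) := by
      rw [hdecomp.submodule_iSup_eq_top]; trivial
    rw [Submodule.mem_iSup_iff_exists_finsupp] at htop
    obtain ⟨f, hf, hsum⟩ := htop
    rw [Finsupp.sum_fintype _ _ (fun _ => rfl), Fin.sum_univ_castSucc] at hsum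
    have hw : f (Fin.last l₀) ∈ Ecs := by
      have h := hf (Fin.last l₀)
      simpa using h
    have hfi : ∀ i : Fin l₀, f i.castSucc ∈ E i := by
      intro i
      have h := hf i.castSucc
      simpa [Fin.coe_castSucc, dif_pos i.isLt] using h
    set ε := min β θm / 3 with hεdef
    have hεβ : ε ≤ β / 3 := by
      have := min_le_left β θm; rw [hεdef]; linarith
    have hεθ : ε ≤ θm / 3 := by
      have := min_le_right β θm; rw [hεdef]; linarith
    have hε : 0 < ε := by
      have := lt_min hβ hθmpos
      rw [hεdef]; linarith
    obtain ⟨c, hc, C₂, hC₂, hEb, hcsb⟩ := hbounds ε hε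
    set w := f (Fin.last l₀) with hwdef
    set S := ∑ i : Fin l₀, ‖f i.castSucc‖ with hS
    have hSnn : 0 ≤ S := Finset.sum_nonneg fun i _ => norm_nonneg _
    set K := C + C₂ * S with hK
    have hKpos : 0 < K := by
      have := mul_nonneg hC₂.le hSnn
      rw [hK]; linarith
    have key : ∀ n : ℕ, c * ‖w‖ ≤ K * Real.exp (-ε * n) := by
      intro n
      have hnn : (0 : ℝ) ≤ (n : ℝ) := Nat.cast_nonneg n
      have h1 : c * Real.exp (-ε * n) * ‖w‖ ≤ ‖(backProd B n).mulVec w‖ :=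
        hcsb w hw n
      have h2 : ‖∑ i : Fin l₀, (backProd B n).mulVec (f i.castSucc)‖ ≤
          C₂ * S * Real.exp (-(2 * ε) * n) := by
        calc ‖∑ i : Fin l₀, (backProd B n).mulVec (f i.castSucc)‖
            ≤ ∑ i : Fin l₀, ‖(backProd B n).mulVec (f i.castSucc)‖ :=
              norm_sum_le _ _
          _ ≤ ∑ i : Fin l₀, C₂ * Real.exp (-(2 * ε) * n) * ‖f i.castSucc‖ := by
              refine Finset.sum_le_sum fun i _ => ?_
              refine le_trans ((hEb i _ (hfi i) n).2) ?_
              have hexp : Real.exp (-(θ i - ε) * n) ≤ Real.exp (-(2 * ε) * n) := by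
                apply Real.exp_le_exp.2
                have h3ε : 3 * ε ≤ θ i := by
                  have := hθmin i
                  linarith
                nlinarith
              exact mul_le_mul_of_nonneg_right
                (mul_le_mul_of_nonneg_left hexp hC₂.le) (norm_nonneg _)
          _ = C₂ * S * Real.exp (-(2 * ε) * n) := by
              rw [← Finset.mul_sum, hS]
              ring
      have hvw : (backProd B n).mulVec w =
          (backProd B n).mulVec v - ∑ i : Fin l₀, (backProd B n).mulVec (f i.castSucc) := by
        have : v - ∑ i : Fin l₀, f i.castSucc = w := by
          rw [← hsum]; abel
        rw [← this]
        rw [show (backProd B n).mulVec (v - ∑ i : Fin l₀, f i.castSucc) =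
            (backProd B n).mulVec v - (backProd B n).mulVec (∑ i : Fin l₀, f i.castSucc) from
          map_sub (Matrix.mulVecLin (backProd B n)) _ _, normsum]
      have h3 : ‖(backProd B n).mulVec w‖ ≤ K * Real.exp (-(2 * ε) * n) := by
        rw [hvw]
        refine le_trans (norm_sub_le _ _) ?_
        have hvb : ‖(backProd B n).mulVec v‖ ≤ C * Real.exp (-(2 * ε) * n) := by
          refine le_trans (hv n) ?_
          have hexp : Real.exp (-β * n) ≤ Real.exp (-(2 * ε) * n) := by
            apply Real.exp_le_exp.2
            nlinarith
          exact mul_le_mul_of_nonneg_left hexp hC.le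
        rw [hK]
        linarith
      have hsplit : Real.exp (-(2 * ε) * n) = Real.exp (-ε * n) * Real.exp (-ε * n) := by
        rw [← Real.exp_add]; ring_nf
      have h4 : c * Real.exp (-ε * n) * ‖w‖ ≤ K * (Real.exp (-ε * n) * Real.exp (-ε * n)) := by
        rw [← hsplit]; linarith
      have hep := Real.exp_pos (-ε * n)
      have h5 : (c * ‖w‖) * Real.exp (-ε * n) ≤ (K * Real.exp (-ε * n)) * Real.exp (-ε * n) := by
        calc (c * ‖w‖) * Real.exp (-ε * n) = c * Real.exp (-ε * n) * ‖w‖ := by ring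
          _ ≤ K * (Real.exp (-ε * n) * Real.exp (-ε * n)) := h4
          _ = (K * Real.exp (-ε * n)) * Real.exp (-ε * n) := by ring
      exact le_of_mul_le_mul_right h5 hep
    have hw0 : w = 0 := by
      have htend : Filter.Tendsto (fun n : ℕ => K * Real.exp (-ε * n))
          Filter.atTop (nhds 0) := by
        have h1 : Filter.Tendsto (fun n : ℕ => ε * (n : ℝ)) Filter.atTop Filter.atTop :=
          Filter.Tendsto.const_mul_atTop hε tendsto_natCast_atTop_atTop
        have h2 : Filter.Tendsto (fun n : ℕ => -ε * (n : ℝ)) Filter.atTop Filter.atBot := by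
          have heq : (fun n : ℕ => -ε * (n : ℝ)) = fun n : ℕ => -(ε * (n : ℝ)) := by
            funext n; ring
          rw [heq]
          exact Filter.tendsto_neg_atBot_iff.mpr h1
        have h3 : Filter.Tendsto (fun n : ℕ => Real.exp (-ε * n))
            Filter.atTop (nhds 0) := Real.tendsto_exp_atBot.comp h2
        simpa using h3.const_mul K
      have hle : c * ‖w‖ ≤ 0 := ge_of_tendsto' htend key
      have hwn : ‖w‖ ≤ 0 := by
        have := norm_nonneg w
        nlinarith
      simpa [norm_le_zero_iff] using hwn
    have hveq : v = ∑ i : Fin l₀, f i.castSucc := by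
      rw [← hsum, hw0, add_zero]
    rw [hveq]
    exact Submodule.sum_mem _ fun i _ => Submodule.mem_iSup_of_mem i (hfi i)
  · intro hv
    rw [Submodule.mem_iSup_iff_exists_finsupp] at hv
    obtain ⟨g, hg, hsum⟩ := hv
    rw [Finsupp.sum_fintype _ _ (fun _ => rfl)] at hsum
    have hε : 0 < θm / 2 := by linarith
    obtain ⟨c, hc, C₂, hC₂, hEb, _⟩ := hbounds (θm / 2) hε
    set S := ∑ i : Fin l₀, ‖g i‖ with hS
    have hSnn : 0 ≤ S := Finset.sum_nonneg fun i _ => norm_nonneg _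
    refine ⟨C₂ * S + 1, by nlinarith, θm / 2, hε, ?_⟩
    intro n
    have hnn : (0 : ℝ) ≤ (n : ℝ) := Nat.cast_nonneg n
    have hvs : (backProd B n).mulVec v = ∑ i : Fin l₀, (backProd B n).mulVec (g i) := by
      rw [← hsum, normsum]
    rw [hvs]
    calc ‖∑ i : Fin l₀, (backProd B n).mulVec (g i)‖
        ≤ ∑ i : Fin l₀, ‖(backProd B n).mulVec (g i)‖ := norm_sum_le _ _
      _ ≤ ∑ i : Fin l₀, C₂ * Real.exp (-(θm / 2) * n) * ‖g i‖ := by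
          refine Finset.sum_le_sum fun i _ => ?_
          refine le_trans ((hEb i _ (hg i) n).2) ?_
          have hexp : Real.exp (-(θ i - θm / 2) * n) ≤ Real.exp (-(θm / 2) * n) := by
            apply Real.exp_le_exp.2
            have := hθmin i
            nlinarith
          exact mul_le_mul_of_nonneg_right
            (mul_le_mul_of_nonneg_left hexp hC₂.le) (norm_nonneg _)
      _ = C₂ * S * Real.exp (-(θm / 2) * n) := by
          rw [← Finset.mul_sum, hS]; ring
      _ ≤ (C₂ * S + 1) * Real.exp (-(θm / 2) * n) :=
          mul_le_mul_of_nonneg_right (by linarith) (Real.exp_pos _).le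
end
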